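/- For the 5-cycle graph C₅ with adjacency matrix Γ over ℤ/2ℤ, the minimum over nonzero k ∈ ker([I₅ | Γ]) of the number of indices i ∈ {1,…,5} with (k_i, k_{i+5}) ≠ (0,0) equals 3. -/

import Mathlib

open Finset Matrix

variable {n R : Type*} [Fintype n] [DecidableEq R]

def pairSupportCard [Zero R] (k : (n → R) × (n → R)) : ℕ :=
  #{i | (k.1 i, k.2 i) ≠ (0, 0)}

lemma pairSupportCard_neg_fst [Ring R] (z x : n → R) :
    pairSupportCard (-z, x) = pairSupportCard (z, x) := by
  simp only [pairSupportCard, Pi.neg_apply, ne_eq, Prod.mk.injEq, neg_eq_zero]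

/-- The kernel of `[I | Γ]` is `{(-Γx, x)}`. -/
lemma setOf_pairSupportCard_ker_eq_image [Ring R] (Γ : Matrix n n R) :
    {m : ℕ | ∃ k : (n → R) × (n → R), k ≠ 0 ∧ k.1 + Γ *ᵥ k.2 = 0 ∧ m = pairSupportCard k} =
      (fun x => pairSupportCard (Γ *ᵥ x, x)) '' {x | x ≠ 0} := by
  ext m
  constructor
  · rintro ⟨⟨z, x⟩, hk, hker, rfl⟩
    obtain rfl : z = -(Γ *ᵥ x) := add_eq_zero_iff_eq_neg.mp hker
    refine ⟨x, fun hx => hk ?_, (pairSupportCard_neg_fst _ _).symm⟩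
    simp [hx]
  · rintro ⟨x, hx, rfl⟩
    exact ⟨(-(Γ *ᵥ x), x), fun h => hx (congrArg Prod.snd h), neg_add_cancel _,
      (pairSupportCard_neg_fst _ _).symm⟩

def cycleFiveAdj : Matrix (Fin 5) (Fin 5) (ZMod 2) :=
  Matrix.of ![![0,1,0,0,1],![1,0,1,0,0],![0,1,0,1,0],![0,0,1,0,1],![1,0,0,1,0]]

set_option maxRecDepth 40000 in
lemma three_le_pairSupportCard_cycleFiveAdj :
    ∀ x : Fin 5 → ZMod 2, x ≠ 0 → 3 ≤ pairSupportCard (cycleFiveAdj *ᵥ x, x) := by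
  decide

lemma pairSupportCard_cycleFiveAdj_single :
    pairSupportCard (cycleFiveAdj *ᵥ Pi.single 0 1, (Pi.single 0 1 : Fin 5 → ZMod 2)) = 3 := by
  decide

/-- The diagonal distance of the 5-cycle over ℤ/2ℤ is 3. -/
theorem stmt_14 (Γ : Matrix (Fin 5) (Fin 5) (ZMod 2))
    (hΓ : Γ = Matrix.of ![![0,1,0,0,1],![1,0,1,0,0],![0,1,0,1,0],![0,0,1,0,1],![1,0,0,1,0]]) :
    sInf {m : ℕ | ∃ k : (Fin 5 → ZMod 2) × (Fin 5 → ZMod 2), k ≠ 0 ∧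
        k.1 + Γ.mulVec k.2 = 0 ∧
        m = (Finset.univ.filter fun i => (k.1 i, k.2 i) ≠ (0, 0)).card} = 3 := by
  subst hΓ
  change sInf {m : ℕ | ∃ k, k ≠ 0 ∧ k.1 + cycleFiveAdj *ᵥ k.2 = 0 ∧ m = pairSupportCard k} = 3
  rw [setOf_pairSupportCard_ker_eq_image]
  refine IsLeast.csInf_eq ⟨⟨Pi.single 0 1, by simp, pairSupportCard_cycleFiveAdj_single⟩, ?_⟩
  rintro _ ⟨x, hx, rfl⟩
  exact three_le_pairSupportCard_cycleFiveAdj x hx
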